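/- arXiv:0906.5394 — 7 statements merged into one kernel-verified Lean document; each statement's English description precedes it below -/
import Mathlib

section
/- For all nonnegative real channel gain magnitudes a = |h_SD| (source–destination), b = |h_SR| (source–relay), c = |h_RD| (relay–destination) of the Gaussian single-relay channel, the decode-and-forward rate R_DF = max( log₂(1+a²), min( log₂(1+b²), log₂(1+a²+c²) ) ) is within 1 bit of the cut-set upper bound: sup over ρ ∈ [-1,1] of min( log₂(1+(1−ρ²)(a²+b²)), log₂(1+a²+c²+2ρ·a·c) ) ≤ R_DF + 1. -/
private lemma logb_two_mul {x : ℝ} (hx : 0 < x) :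
    Real.logb 2 (2 * x) = 1 + Real.logb 2 x := by
  rw [Real.logb_mul (by norm_num) (ne_of_gt hx), Real.logb_self_eq_one (by norm_num)]

private lemma logb_mono {x y : ℝ} (hx : 0 < x) (hxy : x ≤ y) :
    Real.logb 2 x ≤ Real.logb 2 y :=
  Real.logb_le_logb_of_le (by norm_num) hx hxy

/-- The decode-and-forward rate is within 1 bit of the cut-set upper bound
for the Gaussian single-relay channel, for all channel gain magnitudes
`a = |h_SD|`, `b = |h_SR|`, `c = |h_RD|`. -/
theorem decode_forward_within_one_bit (a b c : ℝ)
    (ha : 0 ≤ a) (hb : 0 ≤ b) (hc : 0 ≤ c) :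
    sSup {x : ℝ | ∃ ρ ∈ Set.Icc (-1 : ℝ) 1,
        x = min (Real.logb 2 (1 + (1 - ρ ^ 2) * (a ^ 2 + b ^ 2)))
                (Real.logb 2 (1 + a ^ 2 + c ^ 2 + 2 * ρ * a * c))} ≤
      max (Real.logb 2 (1 + a ^ 2))
        (min (Real.logb 2 (1 + b ^ 2)) (Real.logb 2 (1 + a ^ 2 + c ^ 2))) + 1 := by
  have hLa : (0:ℝ) ≤ Real.logb 2 (1 + a ^ 2) := by
    apply Real.logb_nonneg (by norm_num); nlinarith [sq_nonneg a]
  apply Real.sSup_le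
  · rintro x ⟨ρ, ⟨hρ1, hρ2⟩, rfl⟩
    have hρsq : ρ ^ 2 ≤ 1 := by nlinarith
    have hBCpos : (0:ℝ) < 1 + (1 - ρ ^ 2) * (a ^ 2 + b ^ 2) := by nlinarith [sq_nonneg a, sq_nonneg b]
    have h2ac : 2 * a * c ≤ a ^ 2 + c ^ 2 := by nlinarith [sq_nonneg (a - c)]
    have hρac : 2 * ρ * a * c ≤ a ^ 2 + c ^ 2 := by nlinarith [mul_nonneg ha hc]
    have hρac' : -(a ^ 2 + c ^ 2) ≤ 2 * ρ * a * c := by nlinarith [mul_nonneg ha hc]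
    have hMACpos : (0:ℝ) < 1 + a ^ 2 + c ^ 2 + 2 * ρ * a * c := by nlinarith
    rcases le_or_gt (b ^ 2) (a ^ 2 + c ^ 2) with h | h
    · -- min of the two logs on the RHS is logb (1+b²)
      have hmin : min (Real.logb 2 (1 + b ^ 2)) (Real.logb 2 (1 + a ^ 2 + c ^ 2))
          = Real.logb 2 (1 + b ^ 2) := by
        apply min_eq_left
        apply logb_mono (by nlinarith [sq_nonneg b]) (by linarith)
      rw [hmin]
      refine le_trans (min_le_left _ _) ?_
      -- BC ≤ 2 * max (1+a²) (1+b²)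
      have key : 1 + (1 - ρ ^ 2) * (a ^ 2 + b ^ 2) ≤ 2 * max (1 + a ^ 2) (1 + b ^ 2) := by
        rcases max_cases (1 + a ^ 2) (1 + b ^ 2) with ⟨he, hle⟩ | ⟨he, hle⟩ <;> rw [he] <;>
          nlinarith [sq_nonneg ρ, sq_nonneg a, sq_nonneg b]
      have := logb_mono hBCpos key
      rw [logb_two_mul (by positivity)] at this
      rcases max_cases (1 + a ^ 2) (1 + b ^ 2) with ⟨he, hle⟩ | ⟨he, hle⟩ <;> rw [he] at this
      · have : Real.logb 2 (1 + (1 - ρ ^ 2) * (a ^ 2 + b ^ 2))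
            ≤ 1 + Real.logb 2 (1 + a ^ 2) := this
        have h2 : Real.logb 2 (1 + a ^ 2)
            ≤ max (Real.logb 2 (1 + a ^ 2)) (Real.logb 2 (1 + b ^ 2)) := le_max_left _ _
        linarith [this, h2]
      · have h2 : Real.logb 2 (1 + b ^ 2)
            ≤ max (Real.logb 2 (1 + a ^ 2)) (Real.logb 2 (1 + b ^ 2)) := le_max_right _ _
        linarith [this, h2]
    · -- min of the two logs on the RHS is logb (1+a²+c²)
      have hmin : min (Real.logb 2 (1 + b ^ 2)) (Real.logb 2 (1 + a ^ 2 + c ^ 2))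
          = Real.logb 2 (1 + a ^ 2 + c ^ 2) := by
        apply min_eq_right
        apply logb_mono (by nlinarith [sq_nonneg a, sq_nonneg c]) (by linarith)
      rw [hmin]
      refine le_trans (min_le_right _ _) ?_
      have key : 1 + a ^ 2 + c ^ 2 + 2 * ρ * a * c ≤ 2 * (1 + a ^ 2 + c ^ 2) := by nlinarith
      have := logb_mono hMACpos key
      rw [logb_two_mul (by nlinarith [sq_nonneg a, sq_nonneg c])] at this
      have h2 : Real.logb 2 (1 + a ^ 2 + c ^ 2)
          ≤ max (Real.logb 2 (1 + a ^ 2)) (Real.logb 2 (1 + a ^ 2 + c ^ 2)) := le_max_right _ _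
      linarith [this, h2]
  · have : (0:ℝ) ≤ max (Real.logb 2 (1 + a ^ 2))
        (min (Real.logb 2 (1 + b ^ 2)) (Real.logb 2 (1 + a ^ 2 + c ^ 2))) :=
      le_max_of_le_left hLa
    linarith
end

section
/- Let s₁ ≥ s₂ ≥ 0 and d₁, d₂ ≥ 0 be the channel gain magnitudes of the two-relay Gaussian diamond network (s_i = |h_{S A_i}|, d_i = |h_{A_i D}|). Define the partial-decode-and-forward rate R_PDF as follows: if s₁ ≤ d₁ then R_PDF = log₂(1+s₁²); if s₁ > d₁ then, with α = d₁²/s₁², R_PDF = min( log₂( (1+s₂²)(1+d₁²)/(α·s₂²+1) ), log₂(1+d₁²+d₂²) ). Then the cut-set upper bound C̄ = min{ log₂(1+s₁²+s₂²), log₂(1+(d₁+d₂)²), log₂(1+s₁²)+log₂(1+d₂²), log₂(1+s₂²)+log₂(1+d₁²) } satisfies C̄ ≤ R_PDF + 1. -/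
/-!
Each term of the PDF rate is compared with a single cut, losing at most a factor 2 inside the
logarithm. If `s₁ ≤ d₁`, the broadcast cut `1 + s₁² + s₂²` is at most `2 (1 + s₁²)`. Otherwise
the MAC cut `1 + (d₁ + d₂)²` is at most `2 (1 + d₁² + d₂²)`, and for the first PDF term, with
`t = α s₂²`, the cut `(1 + s₂²)(1 + d₁²)` does the job when `t ≤ 1`, while for `t > 1` the
broadcast cut does, by a polynomial inequality in `a, b, c = s₁², s₂², d₁²`.
-/

lemma logb_two_le_add_one_of_le_two_mul {x y : ℝ} (hx : 0 < x) (hy : 0 < y) (h : x ≤ 2 * y) :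
    Real.logb 2 x ≤ Real.logb 2 y + 1 := by
  calc Real.logb 2 x ≤ Real.logb 2 (2 * y) := Real.logb_le_logb_of_le (by norm_num) hx h
    _ = Real.logb 2 y + 1 := by
      rw [Real.logb_mul two_ne_zero hy.ne', Real.logb_self_eq_one one_lt_two, add_comm]

lemma le_two_mul_div_of_le_two {x t : ℝ} (hx : 0 ≤ x) (ht : 0 < t) (ht2 : t ≤ 2) :
    x ≤ 2 * (x / t) := by
  rw [mul_div_assoc', le_div_iff₀ ht]
  nlinarith

lemma one_add_sq_add_sq_le_two_mul (x y : ℝ) : 1 + (x + y) ^ 2 ≤ 2 * (1 + x ^ 2 + y ^ 2) := by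
  nlinarith [sq_nonneg (x - y)]

lemma one_add_add_le_two_mul_div {a b c : ℝ} (hb : 0 ≤ b) (hba : b ≤ a) (ht : 1 < c / a * b) :
    1 + a + b ≤ 2 * ((1 + b) * (1 + c) / (c / a * b + 1)) := by
  have ha : 0 < a := by
    by_contra! ha
    have ha0 : a = 0 := le_antisymm ha (hb.trans hba)
    norm_num [ha0] at ht
  have hcb : a < c * b := by rwa [div_mul_eq_mul_div, one_lt_div ha] at ht
  have hb0 : 0 < b := by
    rcases hb.lt_or_eq with hb0 | rfl
    · exact hb0
    · linarith [mul_zero c]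
  rw [show c / a * b + 1 = (a + c * b) / a by field_simp; ring, mul_div_assoc',
    div_div_eq_mul_div, le_div_iff₀ (by linarith)]
  -- `b · (2a(1+b)(1+c) - (1+a+b)(a+cb)) = 2a² + (cb - a)(a(2+b) - b(1+b))`
  have hcoef : 0 ≤ a * (2 + b) - b * (1 + b) := by nlinarith
  have key : 0 ≤ b * (2 * a * ((1 + b) * (1 + c)) - (1 + a + b) * (a + c * b)) := by
    nlinarith [mul_nonneg (sub_nonneg.mpr hcb.le) hcoef, sq_nonneg a]
  nlinarith [(mul_nonneg_iff_of_pos_left hb0).mp key]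

theorem partial_decode_forward_within_one_bit_general (s₁ s₂ d₁ d₂ : ℝ)
    (hs : s₂ ≤ s₁) (hs₂ : 0 ≤ s₂) :
    min (min (Real.logb 2 (1 + s₁ ^ 2 + s₂ ^ 2))
             (Real.logb 2 (1 + (d₁ + d₂) ^ 2)))
        (min (Real.logb 2 (1 + s₁ ^ 2) + Real.logb 2 (1 + d₂ ^ 2))
             (Real.logb 2 (1 + s₂ ^ 2) + Real.logb 2 (1 + d₁ ^ 2))) ≤
      (if s₁ ≤ d₁ then Real.logb 2 (1 + s₁ ^ 2)
       else min (Real.logb 2 ((1 + s₂ ^ 2) * (1 + d₁ ^ 2) / ((d₁ ^ 2 / s₁ ^ 2) * s₂ ^ 2 + 1)))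
                (Real.logb 2 (1 + d₁ ^ 2 + d₂ ^ 2))) + 1 := by
  have hba : s₂ ^ 2 ≤ s₁ ^ 2 := pow_le_pow_left₀ hs₂ hs 2
  split_ifs
  · exact ((min_le_left _ _).trans (min_le_left _ _)).trans <|
      logb_two_le_add_one_of_le_two_mul (by positivity) (by positivity) (by linarith)
  rw [← min_add_add_right]
  refine le_min ?_ ?_
  · by_cases ht : d₁ ^ 2 / s₁ ^ 2 * s₂ ^ 2 ≤ 1
    · refine ((min_le_right _ _).trans (min_le_right _ _)).trans ?_
      rw [← Real.logb_mul (by positivity) (by positivity)]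
      exact logb_two_le_add_one_of_le_two_mul (by positivity) (by positivity)
        (le_two_mul_div_of_le_two (by positivity) (by positivity) (by linarith))
    · exact ((min_le_left _ _).trans (min_le_left _ _)).trans <|
        logb_two_le_add_one_of_le_two_mul (by positivity) (by positivity)
          (one_add_add_le_two_mul_div (sq_nonneg s₂) hba (not_le.mp ht))
  · exact ((min_le_left _ _).trans (min_le_right _ _)).trans <|
      logb_two_le_add_one_of_le_two_mul (by positivity) (by positivity)
        (one_add_sq_add_sq_le_two_mul d₁ d₂)

/-- Partial-decode-and-forward achieves within 1 bit of the cut-set upper bound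
of the two-relay Gaussian diamond network, for all channel gain magnitudes
`s₁ = |h_{SA₁}| ≥ s₂ = |h_{SA₂}| ≥ 0` and `d₁ = |h_{A₁D}|, d₂ = |h_{A₂D}| ≥ 0`. -/
theorem partial_decode_forward_within_one_bit (s₁ s₂ d₁ d₂ : ℝ)
    (hs : s₂ ≤ s₁) (hs₂ : 0 ≤ s₂) (hd₁ : 0 ≤ d₁) (hd₂ : 0 ≤ d₂) :
    min (min (Real.logb 2 (1 + s₁ ^ 2 + s₂ ^ 2))
             (Real.logb 2 (1 + (d₁ + d₂) ^ 2)))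
        (min (Real.logb 2 (1 + s₁ ^ 2) + Real.logb 2 (1 + d₂ ^ 2))
             (Real.logb 2 (1 + s₂ ^ 2) + Real.logb 2 (1 + d₁ ^ 2))) ≤
      (if s₁ ≤ d₁ then Real.logb 2 (1 + s₁ ^ 2)
       else min (Real.logb 2 ((1 + s₂ ^ 2) * (1 + d₁ ^ 2) / ((d₁ ^ 2 / s₁ ^ 2) * s₂ ^ 2 + 1)))
                (Real.logb 2 (1 + d₁ ^ 2 + d₂ ^ 2))) + 1 :=
  partial_decode_forward_within_one_bit_general s₁ s₂ d₁ d₂ hs hs₂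
end

section
/- Let K be a positive integer, let λ : Fin K → ℝ and q : Fin K → ℝ be nonnegative, and let S > 0 satisfy ∑ i, q i = S. Then ∑ i, log₂(1 + q i · λ i) ≤ ∑ i, log₂(1 + (S/K) · λ i) + K. In words: for a MIMO channel with singular values √(λ i), any power allocation with total power S achieves at most K bits more than the equal power allocation S/K per eigen-direction. -/
/-!
Termwise, `1 + q λ ≤ (1 + (S/K) λ) (1 + K q / S)`. The factors `1 + K qᵢ / S` have
arithmetic mean `2`, so by AM–GM (concavity of `log`) their `log₂`'s sum to at most `K`.
-/

open Finset Real

theorem Real.sum_log_le_card_mul_log_mean {ι : Type*} {s : Finset ι} (hs : s.Nonempty)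
    {a : ι → ℝ} (ha : ∀ i ∈ s, 0 < a i) :
    ∑ i ∈ s, log (a i) ≤ #s * log ((∑ i ∈ s, a i) / #s) := by
  have hcard : (0 : ℝ) < #s := by exact_mod_cast hs.card_pos
  have hjensen := strictConcaveOn_log_Ioi.concaveOn.le_map_sum (t := s) (w := fun _ => (#s : ℝ)⁻¹)
    (p := a) (fun _ _ => by positivity) (by simp [hcard.ne']) ha
  simp only [smul_eq_mul, ← mul_sum] at hjensen
  rw [div_eq_inv_mul]
  rwa [inv_mul_le_iff₀ hcard] at hjensen

theorem Real.sum_logb_le_card_mul_logb_mean {ι : Type*} {s : Finset ι} (hs : s.Nonempty)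
    {a : ι → ℝ} (ha : ∀ i ∈ s, 0 < a i) {b : ℝ} (hb : 1 < b) :
    ∑ i ∈ s, logb b (a i) ≤ #s * logb b ((∑ i ∈ s, a i) / #s) := by
  simp only [logb, ← sum_div, mul_div_assoc']
  exact div_le_div_of_nonneg_right (sum_log_le_card_mul_log_mean hs ha) (log_pos hb).le

theorem one_add_mul_le_one_add_mul_mul_one_add_div {x y c : ℝ} (hx : 0 ≤ x) (hy : 0 ≤ y)
    (hc : 0 < c) : 1 + x * y ≤ (1 + c * y) * (1 + x / c) := by
  have : (1 + c * y) * (1 + x / c) = 1 + x * y + (c * y + x / c) := by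
    field_simp; ring
  rw [this]
  have : 0 ≤ c * y + x / c := by positivity
  linarith

theorem Real.logb_one_add_mul_le {b x y c : ℝ} (hb : 1 < b) (hx : 0 ≤ x) (hy : 0 ≤ y)
    (hc : 0 < c) : logb b (1 + x * y) ≤ logb b (1 + c * y) + logb b (1 + x / c) := by
  rw [← logb_mul (by positivity) (by positivity)]
  exact logb_le_logb_of_le hb (by positivity) (one_add_mul_le_one_add_mul_mul_one_add_div hx hy hc)

/-- Any power allocation with total power `S` on a MIMO channel with
eigenvalues `λ i` achieves at most `K` bits more than the equal power
allocation `S/K` per eigen-direction. -/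
theorem waterfilling_vs_equal_power (K : ℕ) (hK : 0 < K)
    (lam q : Fin K → ℝ) (hlam : ∀ i, 0 ≤ lam i) (hq : ∀ i, 0 ≤ q i)
    (S : ℝ) (hS : 0 < S) (hsum : ∑ i, q i = S) :
    ∑ i, Real.logb 2 (1 + q i * lam i) ≤
      (∑ i, Real.logb 2 (1 + (S / K) * lam i)) + K := by
  have hKR : (0 : ℝ) < K := by exact_mod_cast hK
  have hc : 0 < S / K := div_pos hS hKR
  have hgain : ∑ i, logb 2 (1 + q i / (S / K)) ≤ K := by
    have hmean : (∑ i, (1 + q i / (S / K))) / #(univ : Finset (Fin K)) = 2 := by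
      rw [sum_add_distrib, ← sum_div, hsum, sum_const, card_univ, Fintype.card_fin, nsmul_eq_mul]
      field_simp
      ring
    have := sum_logb_le_card_mul_logb_mean (s := univ) (univ_nonempty_iff.2 ⟨⟨0, hK⟩⟩)
      (a := fun i => 1 + q i / (S / K)) (fun i _ => by have := hq i; positivity) one_lt_two
    rwa [hmean, logb_self_eq_one one_lt_two, mul_one, card_univ, Fintype.card_fin] at this
  calc ∑ i, logb 2 (1 + q i * lam i)
      ≤ ∑ i, (logb 2 (1 + (S / K) * lam i) + logb 2 (1 + q i / (S / K))) :=
        sum_le_sum fun i _ => logb_one_add_mul_le one_lt_two (hq i) (hlam i) hc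
    _ = (∑ i, logb 2 (1 + (S / K) * lam i)) + ∑ i, logb 2 (1 + q i / (S / K)) :=
        sum_add_distrib
    _ ≤ (∑ i, logb 2 (1 + (S / K) * lam i)) + K := by gcongr
end

section
/- Let K be a positive integer and let X₁,…,X_K, Y₁,…,Y_K be 2K mutually independent real random variables on a probability space, each with the standard Gaussian distribution N(0,1). Let a : Fin K → ℝ be nonnegative. Then P( ∑ i, a i · (X i ² + Y i ²) ≤ 2K ) ≤ exp( K − ∑ i, ln(1 + a i) ). -/
/-!
Chernoff's bound for the lower tail with parameter `t = -1/2`. For a standard Gaussian `Z`,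
`E[exp(t Z²)] = (1 - 2t)^(-1/2)`, so the summand `a Z²` contributes the factor `(1 + a)^(-1/2)`
to the moment generating function of the sum; by independence these factors multiply, and the
two copies `X i`, `Y i` of each weight together contribute `(1 + a i)⁻¹`.
-/

open MeasureTheory ProbabilityTheory Real

theorem mgf_fun_sq_gaussianReal {t : ℝ} (ht : 2 * t < 1) :
    mgf (fun x => x ^ 2) (gaussianReal 0 1) t = (√(1 - 2 * t))⁻¹ := by
  have hpdf : ∀ x : ℝ, gaussianPDFReal 0 1 x • rexp (t * x ^ 2)
      = (√(2 * π))⁻¹ * rexp (-(1 / 2 - t) * x ^ 2) := by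
    intro x
    rw [gaussianPDFReal_def, smul_eq_mul, mul_assoc, ← exp_add]
    congr 3 <;> push_cast <;> ring
  rw [mgf, integral_gaussianReal_eq_integral_smul one_ne_zero]
  simp_rw [hpdf]
  rw [integral_const_mul, integral_gaussian, ← sqrt_inv, ← sqrt_mul (by positivity),
    ← sqrt_inv]
  congr 1
  have : 1 - 2 * t ≠ 0 := by linarith
  have : 1 / 2 - t ≠ 0 := by linarith
  field_simp

theorem mgf_sq_gaussianReal {Ω : Type*} [MeasurableSpace Ω] {P : Measure Ω}
    {Z : Ω → ℝ} (hZ : P.map Z = gaussianReal 0 1) {t : ℝ} (ht : 2 * t < 1) :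
    mgf (fun ω => Z ω ^ 2) P t = (√(1 - 2 * t))⁻¹ := by
  have hZm : AEMeasurable Z P := aemeasurable_of_map_neZero (by rw [hZ]; infer_instance)
  rw [← mgf_fun_sq_gaussianReal ht, ← hZ, mgf_map hZm (by fun_prop)]
  rfl

theorem measureReal_sum_mul_sq_le_le_exp_mul_prod {Ω ι : Type*} [MeasurableSpace Ω] [Fintype ι]
    {P : Measure Ω} [IsProbabilityMeasure P] {Z : ι → Ω → ℝ} (hindep : iIndepFun Z P)
    (hZ : ∀ j, P.map (Z j) = gaussianReal 0 1) (w : ι → ℝ) {t : ℝ} (ht : t ≤ 0)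
    (htw : ∀ j, 2 * (w j * t) < 1) (c : ℝ) :
    P.real {ω | ∑ j, w j * Z j ω ^ 2 ≤ c} ≤
      exp (-t * c) * ∏ j, (√(1 - 2 * (w j * t)))⁻¹ := by
  have hZm : ∀ j, AEMeasurable (Z j) P :=
    fun j => aemeasurable_of_map_neZero (by rw [hZ j]; infer_instance)
  set W : ι → Ω → ℝ := fun j ω => w j * Z j ω ^ 2
  have hmgf : mgf (∑ j, W j) P t = ∏ j, (√(1 - 2 * (w j * t)))⁻¹ := by
    have hWindep : iIndepFun W P :=
      hindep.comp₀ (fun j x => w j * x ^ 2) hZm (fun j => by fun_prop)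
    rw [hWindep.mgf_sum₀ (fun j => by fun_prop)]
    exact Finset.prod_congr rfl fun j _ =>
      (mgf_const_mul (w j)).trans (mgf_sq_gaussianReal (hZ j) (htw j))
  -- a non-integrable exponential moment would make the mgf vanish
  have hint : Integrable (fun ω => exp (t * (∑ j, W j) ω)) P := by
    refine mgf_pos_iff.mp ?_
    rw [hmgf]
    exact Finset.prod_pos fun j _ => inv_pos.mpr (sqrt_pos.mpr (by linarith [htw j]))
  simpa only [Finset.sum_apply, hmgf] using measure_le_le_exp_mul_mgf c ht hint

theorem chernoff_weighted_chi_square_general {Ω : Type*} [MeasurableSpace Ω]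
    (P : Measure Ω) [IsProbabilityMeasure P]
    (K : ℕ) (X Y : Fin K → Ω → ℝ)
    (hindep : iIndepFun (Sum.elim X Y) P)
    (hX : ∀ i, Measure.map (X i) P = gaussianReal 0 1)
    (hY : ∀ i, Measure.map (Y i) P = gaussianReal 0 1)
    (a : Fin K → ℝ) (ha : ∀ i, 0 ≤ a i) :
    (P {ω | ∑ i, a i * ((X i ω) ^ 2 + (Y i ω) ^ 2) ≤ 2 * K}).toReal ≤
      Real.exp (K - ∑ i, Real.log (1 + a i)) := by
  have hw : ∀ j, 0 ≤ Sum.elim a a j := fun j => j.rec ha ha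
  have hsum : ∀ ω, ∑ i, a i * ((X i ω) ^ 2 + (Y i ω) ^ 2)
      = ∑ j, Sum.elim a a j * Sum.elim X Y j ω ^ 2 := fun ω => by
    simp only [Fintype.sum_sum_type, Sum.elim_inl, Sum.elim_inr, ← Finset.sum_add_distrib,
      mul_add]
  have hbound := measureReal_sum_mul_sq_le_le_exp_mul_prod hindep (fun j => j.rec hX hY)
    (Sum.elim a a) (t := -(1 / 2)) (by norm_num) (fun j => by linarith [hw j]) (2 * K)
  simp_rw [← measureReal_def, hsum]
  refine hbound.trans_eq ?_
  have hpos : ∀ i, 0 < 1 + a i := fun i => by linarith [ha i]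
  calc exp (-(-(1 / 2)) * (2 * K)) * ∏ j, (√(1 - 2 * (Sum.elim a a j * -(1 / 2))))⁻¹
      = exp K * ∏ i, ((√(1 + a i))⁻¹ * (√(1 + a i))⁻¹) := by
        rw [Fintype.prod_sum_type, ← Finset.prod_mul_distrib]
        congr 1
        · ring_nf
        · refine Finset.prod_congr rfl fun i _ => ?_
          simp only [Sum.elim_inl, Sum.elim_inr]
          ring_nf
    _ = exp K * ∏ i, (exp (log (1 + a i)))⁻¹ := by
        simp only [← mul_inv, mul_self_sqrt (hpos _).le, exp_log (hpos _)]
    _ = exp (K - ∑ i, log (1 + a i)) := by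
        rw [exp_sub, exp_sum, Finset.prod_inv_distrib, div_eq_mul_inv]

/-- Chernoff-bound computation: if `X i, Y i` (for `i : Fin K`) are `2K` mutually
independent standard Gaussian real random variables and `a i ≥ 0`, then
`P(∑ i, a i * (X i ^ 2 + Y i ^ 2) ≤ 2K) ≤ exp(K - ∑ i, ln (1 + a i))`. -/
theorem chernoff_weighted_chi_square {Ω : Type*} [MeasurableSpace Ω]
    (P : Measure Ω) [IsProbabilityMeasure P]
    (K : ℕ) (hK : 0 < K) (X Y : Fin K → Ω → ℝ)
    (hindep : iIndepFun (Sum.elim X Y) P)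
    (hX : ∀ i, Measure.map (X i) P = gaussianReal 0 1)
    (hY : ∀ i, Measure.map (Y i) P = gaussianReal 0 1)
    (a : Fin K → ℝ) (ha : ∀ i, 0 ≤ a i) :
    (P {ω | ∑ i, a i * ((X i ω) ^ 2 + (Y i ω) ^ 2) ≤ 2 * K}).toReal ≤
      Real.exp (K - ∑ i, Real.log (1 + a i)) :=
  chernoff_weighted_chi_square_general P K X Y hindep hX hY a ha
end

section
/- For every real SNR > 0, the capacity n = max(⌈log₂ SNR⌉, 0) of the deterministic point-to-point channel is within one bit of the Gaussian point-to-point capacity: log₂(1+SNR) − 1 ≤ max(⌈log₂ SNR⌉, 0) ≤ log₂(1+SNR) + 1. -/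
/-- The capacity `n = ⌈log₂ SNR⌉⁺` of the deterministic point-to-point channel
is within one bit of the Gaussian point-to-point capacity `log₂(1 + SNR)`. -/
theorem det_p2p_within_one_bit (SNR : ℝ) (h : 0 < SNR) :
    Real.logb 2 (1 + SNR) - 1 ≤ ((max ⌈Real.logb 2 SNR⌉ 0 : ℤ) : ℝ) ∧
    ((max ⌈Real.logb 2 SNR⌉ 0 : ℤ) : ℝ) ≤ Real.logb 2 (1 + SNR) + 1 := by
  set L := Real.logb 2 SNR with hL
  constructor
  · have hmax : (1:ℝ) + SNR ≤ 2 * max 1 SNR := by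
      rcases le_total SNR 1 with hs | hs
      · rw [max_eq_left hs]; linarith
      · rw [max_eq_right hs]; linarith
    have h2 : Real.logb 2 (1 + SNR) ≤ Real.logb 2 (2 * max 1 SNR) :=
      Real.logb_le_logb_of_le (by norm_num) (by linarith) hmax
    have h3 : Real.logb 2 (2 * max 1 SNR) = 1 + Real.logb 2 (max 1 SNR) := by
      rw [Real.logb_mul (by norm_num) (by positivity),
        Real.logb_self_eq_one (by norm_num)]
    have h4 : Real.logb 2 (max 1 SNR) ≤ ((max ⌈L⌉ 0 : ℤ) : ℝ) := by
      rcases le_total SNR 1 with hs | hs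
      · rw [max_eq_left hs, Real.logb_one]
        have : (0:ℤ) ≤ max ⌈L⌉ 0 := le_max_right _ _
        exact_mod_cast this
      · rw [max_eq_right hs]
        calc L ≤ (⌈L⌉ : ℝ) := Int.le_ceil L
          _ ≤ ((max ⌈L⌉ 0 : ℤ) : ℝ) := by exact_mod_cast le_max_left ⌈L⌉ 0
    linarith
  · rcases le_or_gt ⌈L⌉ 0 with hc | hc
    · rw [max_eq_right hc]
      have h0 : 0 ≤ Real.logb 2 (1 + SNR) := Real.logb_nonneg (by norm_num) (by linarith)
      push_cast; linarith
    · rw [max_eq_left hc.le]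
      have h2 : L ≤ Real.logb 2 (1 + SNR) :=
        Real.logb_le_logb_of_le (by norm_num) h (by linarith)
      have h3 := Int.ceil_lt_add_one L
      push_cast at h3 ⊢
      linarith
end

section
/- Let SNR₁ ≥ SNR₂ > 0 be real numbers and set n₁ = max(⌈log₂ SNR₁⌉, 0), n₂ = max(⌈log₂ SNR₂⌉, 0). If R₁, R₂ ≥ 0 satisfy the deterministic MAC capacity-region constraints R₂ ≤ n₂ and R₁ + R₂ ≤ n₁, then the rate pair (max(R₁−1,0), max(R₂−1,0)) lies in the Gaussian MAC capacity region, i.e., max(R₁−1,0) ≤ log₂(1+SNR₁), max(R₂−1,0) ≤ log₂(1+SNR₂), and max(R₁−1,0) + max(R₂−1,0) ≤ log₂(1+SNR₁+SNR₂). Thus the deterministic MAC region is within one bit per user of the Gaussian MAC region. -/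
lemma logb_nonneg_one_add {S : ℝ} (hS : 0 < S) : 0 ≤ Real.logb 2 (1 + S) :=
  Real.logb_nonneg one_lt_two (by linarith)

lemma ceil_pos_le {S : ℝ} (hS : 0 < S) :
    ((max ⌈Real.logb 2 S⌉ 0 : ℤ) : ℝ) ≤ Real.logb 2 (1 + S) + 1 := by
  have hmono : Real.logb 2 S ≤ Real.logb 2 (1 + S) :=
    Real.logb_le_logb_of_le one_lt_two (by linarith) (by linarith)
  have hceil : (⌈Real.logb 2 S⌉ : ℝ) < Real.logb 2 S + 1 := Int.ceil_lt_add_one _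
  have h0 : 0 ≤ Real.logb 2 (1 + S) := logb_nonneg_one_add hS
  rcases le_total ⌈Real.logb 2 S⌉ 0 with h | h
  · rw [max_eq_right h]; push_cast; linarith
  · rw [max_eq_left h]; linarith

/-- The deterministic MAC capacity region is within one bit per user of the
Gaussian MAC capacity region: if `(R₁, R₂)` satisfies `R₂ ≤ n₂` and
`R₁ + R₂ ≤ n₁` with `nᵢ = ⌈log₂ SNRᵢ⌉⁺`, then `((R₁-1)⁺, (R₂-1)⁺)` lies in
the Gaussian MAC capacity region. -/
theorem det_mac_within_one_bit (SNR₁ SNR₂ : ℝ) (h₂ : 0 < SNR₂) (h₁₂ : SNR₂ ≤ SNR₁)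
    (R₁ R₂ : ℝ) (hR₁ : 0 ≤ R₁) (hR₂ : 0 ≤ R₂)
    (hc₂ : R₂ ≤ ((max ⌈Real.logb 2 SNR₂⌉ 0 : ℤ) : ℝ))
    (hc₁ : R₁ + R₂ ≤ ((max ⌈Real.logb 2 SNR₁⌉ 0 : ℤ) : ℝ)) :
    max (R₁ - 1) 0 ≤ Real.logb 2 (1 + SNR₁) ∧
    max (R₂ - 1) 0 ≤ Real.logb 2 (1 + SNR₂) ∧
    max (R₁ - 1) 0 + max (R₂ - 1) 0 ≤ Real.logb 2 (1 + SNR₁ + SNR₂) := by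
  have h₁ : 0 < SNR₁ := lt_of_lt_of_le h₂ h₁₂
  have k₁ := ceil_pos_le h₁
  have k₂ := ceil_pos_le h₂
  have l₁ := logb_nonneg_one_add h₁
  have l₂ := logb_nonneg_one_add h₂
  have m₁ : Real.logb 2 (1 + SNR₁) ≤ Real.logb 2 (1 + SNR₁ + SNR₂) :=
    Real.logb_le_logb_of_le one_lt_two (by linarith) (by linarith)
  have m₂ : Real.logb 2 (1 + SNR₂) ≤ Real.logb 2 (1 + SNR₁ + SNR₂) :=
    Real.logb_le_logb_of_le one_lt_two (by linarith) (by linarith)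
  refine ⟨?_, ?_, ?_⟩
  · rcases le_total (R₁ - 1) 0 with h | h
    · rw [max_eq_right h]; exact l₁
    · rw [max_eq_left h]; linarith
  · rcases le_total (R₂ - 1) 0 with h | h
    · rw [max_eq_right h]; exact l₂
    · rw [max_eq_left h]; linarith
  · rcases le_total (R₁ - 1) 0 with ha | ha <;> rcases le_total (R₂ - 1) 0 with hb | hb
    · rw [max_eq_right ha, max_eq_right hb]
      linarith
    · rw [max_eq_right ha, max_eq_left hb]; linarith
    · rw [max_eq_left ha, max_eq_right hb]; linarith
    · rw [max_eq_left ha, max_eq_left hb]; linarith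
end

section
/- For every natural number k ≥ 2, consider the 2×2 real matrix H = 2^k · [[3/4, 1], [1, 1]]. Then: (a) the rank over the field 𝔽₂ = ZMod 2 of the 2k × 2k block matrix [[I_k, I_k], [I_k, I_k]] (each block the k×k identity over 𝔽₂) equals k; and (b) (1/2)·log₂ det(I₂ + H Hᵀ) ≥ 2k − 2. Consequently the gap between the real Gaussian MIMO capacity lower bound (1/2)·log₂ det(I₂ + H Hᵀ) and the capacity k of the corresponding linear finite-field deterministic MIMO channel is at least k − 2, which is unbounded in k. -/
/-!
The block matrix `[[A, A], [A, A]]` factors as `[1; 1] * A * [1, 1]` and conversely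
`A = [1, 0] * [[A, A], [A, A]] * [1; 0]`, so it has the rank of `A`; for `A = I_k` over `𝔽₂`
this is `k`.

For a real `2 × 2` matrix `H`, `det (1 + H Hᵀ) = 1 + tr (H Hᵀ) + (det H)² ≥ (det H)²`, and here
`det H = 4^k · (3/4 - 1) = -4^k / 4`, so `(1/2) log₂ det (1 + H Hᵀ) ≥ log₂ |det H| = 2k - 2`.
-/

open Matrix

namespace Matrix

variable {m n R : Type*} [Fintype m] [Fintype n] [DecidableEq m] [DecidableEq n]

theorem fromBlocks_self_eq [Semiring R] (A : Matrix m n R) :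
    fromBlocks A A A A = fromRows (1 : Matrix m m R) 1 * A * fromCols (1 : Matrix n n R) 1 := by
  simp [fromRows_mul]

theorem eq_fromCols_mul_fromBlocks_self_mul_fromRows [Semiring R] (A : Matrix m n R) :
    A = (fromCols 1 0 : Matrix m (m ⊕ m) R) * fromBlocks A A A A *
      (fromRows 1 0 : Matrix (n ⊕ n) n R) := by
  rw [Matrix.mul_assoc, fromBlocks_mul_fromRows, fromCols_mul_fromRows]
  simp

theorem rank_fromBlocks_self [CommRing R] [StrongRankCondition R] (A : Matrix m n R) :
    (fromBlocks A A A A).rank = A.rank := by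
  refine le_antisymm ?_ ?_
  · rw [fromBlocks_self_eq]
    exact (rank_mul_le_left _ _).trans (rank_mul_le_right _ _)
  · conv_lhs => rw [eq_fromCols_mul_fromBlocks_self_mul_fromRows A]
    exact (rank_mul_le_left _ _).trans (rank_mul_le_right _ _)

theorem det_one_add_fin_two [CommRing R] (M : Matrix (Fin 2) (Fin 2) R) :
    (1 + M).det = 1 + M.trace + M.det := by
  simp only [det_fin_two, trace_fin_two, add_apply, one_apply_eq, ne_eq, zero_ne_one,
    one_ne_zero, not_false_eq_true, one_apply_ne]
  ring

theorem sq_det_le_det_one_add_mul_transpose_fin_two [CommRing R] [LinearOrder R]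
    [IsStrictOrderedRing R] (H : Matrix (Fin 2) (Fin 2) R) : H.det ^ 2 ≤ (1 + H * Hᵀ).det := by
  have htrace : 0 ≤ (H * Hᵀ).trace := by
    simp only [trace_fin_two, mul_apply, Fin.sum_univ_two, transpose_apply, ← sq]
    positivity
  rw [det_one_add_fin_two, det_mul, det_transpose, ← sq]
  linarith

end Matrix

theorem mimo_unbounded_gap_general (k : ℕ) :
    (Matrix.fromBlocks (1 : Matrix (Fin k) (Fin k) (ZMod 2))
        (1 : Matrix (Fin k) (Fin k) (ZMod 2))
        (1 : Matrix (Fin k) (Fin k) (ZMod 2))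
        (1 : Matrix (Fin k) (Fin k) (ZMod 2))).rank = k ∧
    (2 * (k : ℝ) - 2) ≤ (1 / 2) *
      Real.logb 2
        ((1 + ((2 : ℝ) ^ k • !![(3 : ℝ)/4, 1; 1, 1]) *
              ((2 : ℝ) ^ k • !![(3 : ℝ)/4, 1; 1, 1])ᵀ).det) := by
  refine ⟨by rw [rank_fromBlocks_self, rank_one, Fintype.card_fin], ?_⟩
  set H : Matrix (Fin 2) (Fin 2) ℝ := (2 : ℝ) ^ k • !![(3 : ℝ)/4, 1; 1, 1]
  have hdetH : H.det ^ 2 = ((2 : ℝ) ^ k) ^ 4 / 2 ^ 4 := by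
    simp only [H, det_smul, det_fin_two_of, Fintype.card_fin]
    ring
  have hlog : Real.logb 2 (H.det ^ 2) = 4 * k - 4 := by
    rw [hdetH, Real.logb_div (by positivity) (by positivity), Real.logb_pow, Real.logb_pow,
      Real.logb_pow, Real.logb_self_eq_one one_lt_two]
    push_cast
    ring
  have hmono := Real.logb_le_logb_of_le one_lt_two (by rw [hdetH]; positivity)
    (sq_det_le_det_one_add_mul_transpose_fin_two H)
  linarith

/-- The MIMO example showing the linear finite-field deterministic model does not
approximate the Gaussian model within a constant gap: for `k ≥ 2` and
`H = 2^k • [[3/4, 1], [1, 1]]`, the 𝔽₂-rank of `[[I_k, I_k], [I_k, I_k]]`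
(the deterministic MIMO capacity) equals `k`, while the real Gaussian MIMO
capacity lower bound `(1/2)·log₂ det(I₂ + H Hᵀ)` is at least `2k - 2`. -/
theorem mimo_unbounded_gap (k : ℕ) (hk : 2 ≤ k) :
    (Matrix.fromBlocks (1 : Matrix (Fin k) (Fin k) (ZMod 2))
        (1 : Matrix (Fin k) (Fin k) (ZMod 2))
        (1 : Matrix (Fin k) (Fin k) (ZMod 2))
        (1 : Matrix (Fin k) (Fin k) (ZMod 2))).rank = k ∧
    (2 * (k : ℝ) - 2) ≤ (1 / 2) *
      Real.logb 2
        ((1 + ((2 : ℝ) ^ k • !![(3 : ℝ)/4, 1; 1, 1]) *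
              ((2 : ℝ) ^ k • !![(3 : ℝ)/4, 1; 1, 1])ᵀ).det) :=
  mimo_unbounded_gap_general k
end
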